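/- arXiv:1506.02446 — 6 statements merged into one kernel-verified Lean document; each statement's English description precedes it below -/
import Mathlib

section
/- Let k1V, k2, k3, k4 > 0 and define λ̄1 = k1V·(k2+k4)/(k2·k3) and λ̄2 = k1V/k2. Define π(x1, x2) = (e^(−λ̄1) λ̄1^{x1}/x1!) · (e^(−λ̄2) λ̄2^{x2}/x2!) for (x1, x2) ∈ ℕ². Then π satisfies the stationary master equation of the full linear system: for every (x1, x2) ∈ ℕ², (k1V + k3·x1 + (k2 + k4)·x2)·π(x1, x2) = k1V·π(x1−1, x2) + k2·(x2+1)·π(x1, x2+1) + k3·(x1+1)·π(x1+1, x2−1) + k4·(x2+1)·π(x1−1, x2+1), where any term whose argument has a negative coordinate is taken to be zero. Hence the product of independent Poisson distributions with means λ̄1 and λ̄2 is the invariant distribution of the full linear system. -/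
set_option maxHeartbeats 1600000 in
/-- The product of independent Poisson distributions with means
`λ̄1 = k1V(k2+k4)/(k2k3)` and `λ̄2 = k1V/k2` satisfies the stationary master
equation of the full linear system.  Terms whose argument would have a negative
coordinate are taken to be zero. -/
theorem product_poisson_invariant_full_linear_system
    (k1V k2 k3 k4 : ℝ) (h1 : 0 < k1V) (h2 : 0 < k2) (h3 : 0 < k3) (h4 : 0 < k4)
    (lam1 lam2 : ℝ)
    (hlam1 : lam1 = k1V * (k2 + k4) / (k2 * k3))
    (hlam2 : lam2 = k1V / k2)
    (pi : ℕ → ℕ → ℝ)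
    (hpi : ∀ x1 x2 : ℕ, pi x1 x2 =
      (Real.exp (-lam1) * lam1 ^ x1 / x1.factorial) *
        (Real.exp (-lam2) * lam2 ^ x2 / x2.factorial)) :
    ∀ x1 x2 : ℕ,
      (k1V + k3 * x1 + (k2 + k4) * x2) * pi x1 x2 =
        k1V * (if x1 = 0 then 0 else pi (x1 - 1) x2) +
          k2 * (x2 + 1) * pi x1 (x2 + 1) +
          k3 * (x1 + 1) * (if x2 = 0 then 0 else pi (x1 + 1) (x2 - 1)) +
          k4 * (x2 + 1) * (if x1 = 0 then 0 else pi (x1 - 1) (x2 + 1)) := by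
  subst hlam1 hlam2
  have hk1 : k1V ≠ 0 := h1.ne'
  have hk2 : k2 ≠ 0 := h2.ne'
  have hk3 : k3 ≠ 0 := h3.ne'
  have hk24 : k2 + k4 ≠ 0 := by positivity
  intro x1 x2
  have hf1 : ((Nat.factorial x1 : ℝ)) ≠ 0 := by positivity
  have hf2 : ((Nat.factorial x2 : ℝ)) ≠ 0 := by positivity
  rcases x1 with _ | m <;> rcases x2 with _ | n
  · simp only [hpi, if_pos rfl, ↓reduceIte, Nat.factorial_zero, Nat.factorial_one, pow_zero,
      pow_one, Nat.cast_zero, Nat.cast_one]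
    field_simp
    ring_nf
    rw [mul_assoc k1V k2 k2⁻¹, mul_inv_cancel₀ hk2, mul_one]
  · simp only [hpi, if_pos rfl, ↓reduceIte, if_neg (Nat.succ_ne_zero n), Nat.succ_sub_one,
      Nat.factorial_succ, Nat.factorial_zero, pow_succ, pow_zero,
      Nat.cast_succ, Nat.cast_zero, Nat.cast_mul, Nat.cast_add, Nat.cast_one]
    simp only [Nat.factorial_succ, Nat.cast_mul, Nat.cast_add, Nat.cast_one] at hf2 ⊢
    field_simp
    ring
  · simp only [hpi, if_pos rfl, ↓reduceIte, if_neg (Nat.succ_ne_zero m), Nat.succ_sub_one,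
      Nat.factorial_succ, Nat.factorial_zero, pow_succ, pow_zero,
      Nat.cast_succ, Nat.cast_zero, Nat.cast_mul, Nat.cast_add, Nat.cast_one]
    simp only [Nat.factorial_succ, Nat.cast_mul, Nat.cast_add, Nat.cast_one] at hf1 ⊢
    field_simp
    ring
  · simp only [hpi, if_neg (Nat.succ_ne_zero m), if_neg (Nat.succ_ne_zero n),
      Nat.succ_sub_one, Nat.factorial_succ, pow_succ,
      Nat.cast_succ, Nat.cast_mul, Nat.cast_add, Nat.cast_one]
    simp only [Nat.factorial_succ, Nat.cast_mul, Nat.cast_add, Nat.cast_one] at hf1 hf2 ⊢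
    field_simp
    ring
end

section
/- Let k1V, k2, k3, k4 > 0. Set the CMA effective death rate k̄2 = k2·k3/(k2+k3+k4) and λ_CMA = k1V/k̄2 = k1V·(k2+k3+k4)/(k2·k3), and let λ̄1 = k1V·(k2+k4)/(k2·k3), λ̄2 = k1V/k2 and π(x1,x2) = e^(−λ̄1)λ̄1^{x1}/x1! · e^(−λ̄2)λ̄2^{x2}/x2!. Then for every s ∈ ℕ, e^(−λ_CMA) λ_CMA^s / s! = Σ_{n=0}^{s} π(n, s−n). That is, the invariant distribution of the CMA effective slow chain (the birth–death chain with birth rate k1V and death rate k̄2·n, whose stationary distribution is Poisson(λ_CMA)) is exactly equal to the marginal distribution of the slow variable S = X1 + X2 under the invariant distribution of the full linear system. -/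
open Finset

/-! The full system's invariant law is a product of Poisson(λ̄1) and Poisson(λ̄2), so the law of
`X1 + X2` is Poisson(λ̄1 + λ̄2) (binomial theorem), and `λ̄1 + λ̄2 = λ_CMA` by clearing
denominators. -/

open Nat in
theorem add_pow_div_factorial {K : Type*} [Field K] [CharZero K] (x y : K) (s : ℕ) :
    (x + y) ^ s / s ! = ∑ n ∈ range (s + 1), x ^ n / n ! * (y ^ (s - n) / (s - n)!) := by
  rw [add_pow, sum_div]
  refine sum_congr rfl fun n hn => ?_
  have hs : (s ! : K) ≠ 0 := cast_ne_zero.mpr s.factorial_ne_zero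
  rw [cast_choose K (Nat.lt_succ_iff.mp (mem_range.mp hn))]
  field_simp

open Nat in
theorem exp_neg_add_mul_add_pow_div_factorial (a b : ℝ) (s : ℕ) :
    Real.exp (-(a + b)) * (a + b) ^ s / s ! =
      ∑ n ∈ range (s + 1), Real.exp (-a) * a ^ n / n ! * (Real.exp (-b) * b ^ (s - n) / (s - n)!) := by
  rw [mul_div_assoc, add_pow_div_factorial, mul_sum, neg_add, Real.exp_add]
  refine sum_congr rfl fun n _ => ?_
  ring

theorem cma_rate_eq_add {k1V k2 k3 k4 : ℝ} (h2 : k2 ≠ 0) (h3 : k3 ≠ 0) :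
    k1V * (k2 + k3 + k4) / (k2 * k3) = k1V * (k2 + k4) / (k2 * k3) + k1V / k2 := by
  field_simp
  ring

theorem CMA_effective_invariant_eq_slow_marginal_general
    (k1V k2 k3 k4 : ℝ) (h2 : 0 < k2) (h3 : 0 < k3)
    (lamCMA lam1 lam2 : ℝ)
    (hlamCMA' : lamCMA = k1V * (k2 + k3 + k4) / (k2 * k3))
    (hlam1 : lam1 = k1V * (k2 + k4) / (k2 * k3))
    (hlam2 : lam2 = k1V / k2)
    (pi : ℕ → ℕ → ℝ)
    (hpi : ∀ x1 x2 : ℕ, pi x1 x2 =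
      (Real.exp (-lam1) * lam1 ^ x1 / x1.factorial) *
        (Real.exp (-lam2) * lam2 ^ x2 / x2.factorial)) :
    ∀ s : ℕ,
      Real.exp (-lamCMA) * lamCMA ^ s / s.factorial =
        ∑ n ∈ Finset.range (s + 1), pi n (s - n) := by
  intro s
  have hlam : lamCMA = lam1 + lam2 := by
    rw [hlamCMA', hlam1, hlam2, cma_rate_eq_add h2.ne' h3.ne']
  simp only [hlam, hpi]
  exact exp_neg_add_mul_add_pow_div_factorial lam1 lam2 s

/-- The Poisson(λ_CMA) invariant distribution of the CMA effective slow chain,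
with `λ_CMA = k1V(k2+k3+k4)/(k2k3)`, is exactly the marginal of the slow
variable `S = X1 + X2` under the product-Poisson invariant distribution of the
full linear system. -/
theorem CMA_effective_invariant_eq_slow_marginal
    (k1V k2 k3 k4 : ℝ) (h1 : 0 < k1V) (h2 : 0 < k2) (h3 : 0 < k3) (h4 : 0 < k4)
    (kbar lamCMA lam1 lam2 : ℝ)
    (hkbar : kbar = k2 * k3 / (k2 + k3 + k4))
    (hlamCMA : lamCMA = k1V / kbar)
    (hlamCMA' : lamCMA = k1V * (k2 + k3 + k4) / (k2 * k3))
    (hlam1 : lam1 = k1V * (k2 + k4) / (k2 * k3))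
    (hlam2 : lam2 = k1V / k2)
    (pi : ℕ → ℕ → ℝ)
    (hpi : ∀ x1 x2 : ℕ, pi x1 x2 =
      (Real.exp (-lam1) * lam1 ^ x1 / x1.factorial) *
        (Real.exp (-lam2) * lam2 ^ x2 / x2.factorial)) :
    ∀ s : ℕ,
      Real.exp (-lamCMA) * lamCMA ^ s / s.factorial =
        ∑ n ∈ Finset.range (s + 1), pi n (s - n) :=
  CMA_effective_invariant_eq_slow_marginal_general k1V k2 k3 k4 h2 h3 lamCMA lam1 lam2 hlamCMA'
    hlam1 hlam2 pi hpi
end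

section
/- Let n be a finite index type, let G be a real n × n matrix, let ρ be a nonzero real number and t a real number, and set M = (1/ρ)·G + I, where I is the identity matrix. Then the matrix exponential satisfies exp(t·G) = e^(−ρt) · exp(ρt·M); equivalently, entrywise, for all indices a, b: (exp(t·G))_{a,b} = Σ_{r=0}^{∞} e^(−ρt) (ρt)^r / r! · (M^r)_{a,b}, where the series converges. In particular, the probabilities assigned by the uniformization formula P(N_U = r) = [e^(−ρt)(ρt)^r/r! · (M^r)_{a,b}] / (exp(Gt))_{a,b} sum to one over r whenever (exp(Gt))_{a,b} ≠ 0. -/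
open Matrix

attribute [local instance] Matrix.linftyOpNormedRing Matrix.linftyOpNormedAlgebra

/-! Since `ρt • M = t • G + ρt • 1` and the scalar summand is central, `exp (ρt • M)` factors as
`e^{ρt} exp (t • G)`; the entrywise series is the exponential series of `ρt • M`, read off one
coordinate at a time. -/

namespace NormedSpace

theorem exp_add_algebraMap {𝔸 : Type*} [NormedRing 𝔸] [NormedAlgebra ℝ 𝔸]
    [CompleteSpace 𝔸] (x : 𝔸) (c : ℝ) :
    exp (x + algebraMap ℝ 𝔸 c) = Real.exp c • exp x := by
  have hball : ∀ y : 𝔸, y ∈ Metric.eball 0 (expSeries ℝ 𝔸).radius := by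
    simp [expSeries_radius_eq_top]
  rw [exp_add_of_commute_of_mem_ball (Algebra.commutes c x).symm (hball _) (hball _),
    ← algebraMap_exp_comm, Real.exp_eq_exp_ℝ, ← Algebra.commutes, Algebra.smul_def]

theorem exp_smul_eq_uniformized {𝔸 : Type*} [NormedRing 𝔸]
    [NormedAlgebra ℝ 𝔸] [CompleteSpace 𝔸] (G : 𝔸) {ρ : ℝ} (hρ : ρ ≠ 0) (t : ℝ) :
    exp (t • G) = Real.exp (-ρ * t) • exp ((ρ * t) • (ρ⁻¹ • G + 1)) := by
  have hsplit : (ρ * t) • (ρ⁻¹ • G + 1) = t • G + algebraMap ℝ 𝔸 (ρ * t) := by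
    rw [smul_add, smul_smul, mul_right_comm, mul_inv_cancel₀ hρ, one_mul,
      Algebra.algebraMap_eq_smul_one]
  rw [hsplit, exp_add_algebraMap, smul_smul, ← Real.exp_add, neg_mul, neg_add_cancel,
    Real.exp_zero, one_smul]

end NormedSpace

theorem Matrix.hasSum_exp_apply {n 𝕂 : Type*} [Fintype n] [DecidableEq n] [RCLike 𝕂]
    (A : Matrix n n 𝕂) (a b : n) :
    HasSum (fun r : ℕ => (A ^ r) a b / r.factorial) (NormedSpace.exp A a b) := by
  have hterm (r : ℕ) : (A ^ r) a b / r.factorial = (((r.factorial : 𝕂)⁻¹) • A ^ r) a b := by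
    rw [Matrix.smul_apply, smul_eq_mul, div_eq_inv_mul]
  simp_rw [hterm]
  exact Pi.hasSum.mp (Pi.hasSum.mp (NormedSpace.exp_series_hasSum_exp' (𝕂 := 𝕂) A) a) b

/-- Uniformization: for a real square matrix `G`, a nonzero rate `ρ` and a time
`t`, setting `M = ρ⁻¹ • G + I` one has `exp(tG) = e^{-ρt} exp(ρt M)`;
entrywise, `(exp(tG))_{a,b}` is the (convergent) sum of
`e^{-ρt}(ρt)^r/r! (M^r)_{a,b}` over `r`, and hence the uniformization
probabilities `e^{-ρt}(ρt)^r/r! (M^r)_{a,b} / (exp(tG))_{a,b}` sum to one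
whenever `(exp(tG))_{a,b} ≠ 0`. -/
theorem uniformization_matrix_exponential
    {n : Type*} [Fintype n] [DecidableEq n]
    (G : Matrix n n ℝ) (ρ t : ℝ) (hρ : ρ ≠ 0)
    (M : Matrix n n ℝ) (hM : M = ρ⁻¹ • G + 1) :
    NormedSpace.exp (t • G) = Real.exp (-ρ * t) • NormedSpace.exp ((ρ * t) • M) ∧
    (∀ a b : n,
      HasSum
        (fun r : ℕ => Real.exp (-ρ * t) * (ρ * t) ^ r / r.factorial * (M ^ r) a b)
        (NormedSpace.exp (t • G) a b)) ∧
    (∀ a b : n, NormedSpace.exp (t • G) a b ≠ 0 →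
      HasSum
        (fun r : ℕ =>
          Real.exp (-ρ * t) * (ρ * t) ^ r / r.factorial * (M ^ r) a b /
            NormedSpace.exp (t • G) a b)
        1) := by
  have hexp : NormedSpace.exp (t • G) = Real.exp (-ρ * t) • NormedSpace.exp ((ρ * t) • M) :=
    hM ▸ NormedSpace.exp_smul_eq_uniformized G hρ t
  have hentry (a b : n) : HasSum
      (fun r : ℕ => Real.exp (-ρ * t) * (ρ * t) ^ r / r.factorial * (M ^ r) a b)
      (NormedSpace.exp (t • G) a b) := by
    have hterm (r : ℕ) : Real.exp (-ρ * t) * (ρ * t) ^ r / r.factorial * (M ^ r) a b =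
        Real.exp (-ρ * t) * ((((ρ * t) • M) ^ r) a b / r.factorial) := by
      rw [smul_pow, Matrix.smul_apply, smul_eq_mul]
      ring
    rw [hexp, Matrix.smul_apply, smul_eq_mul]
    simp_rw [hterm]
    exact ((ρ * t) • M).hasSum_exp_apply a b |>.mul_left _
  refine ⟨hexp, hentry, fun a b hne => ?_⟩
  simpa [div_self hne] using (hentry a b).div_const (NormedSpace.exp (t • G) a b)
end

section
/- Let k1V, k2, κ, γ > 0 and define x̄2 = k1V·(γ+k2)/(γ·k2), x̄1 = x̄2 + k1V/κ, and x̄3 = k1V/k2. Define π(x1,x2,x3) = Π_{j=1}^{3} e^(−x̄j) x̄j^{x_j}/x_j! for (x1,x2,x3) ∈ ℕ³. Then π satisfies the stationary master equation of the three-species linear system: for every (x1,x2,x3) ∈ ℕ³, (k1V + k2·x3 + κ·x1 + κ·x2 + γ·x2 + γ·x3)·π(x1,x2,x3) = k1V·π(x1−1,x2,x3) + k2·(x3+1)·π(x1,x2,x3+1) + κ·(x1+1)·π(x1+1,x2−1,x3) + κ·(x2+1)·π(x1−1,x2+1,x3) + γ·(x2+1)·π(x1,x2+1,x3−1) + γ·(x3+1)·π(x1,x2−1,x3+1),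 where any term whose argument has a negative coordinate is zero. Hence the product of independent Poissons with means (x̄1, x̄2, x̄3) is the invariant distribution of the three-species linear system. -/
/-!
The means are the equilibrium of the deterministic rate equations
`k1V + κ x̄2 = κ x̄1`, `κ x̄1 + γ x̄3 = (κ + γ) x̄2`, `γ x̄2 = (γ + k2) x̄3`, whence also
`k2 x̄3 = k1V`. A Poisson weight of mean `m` satisfies `(n + 1) p(n + 1) = m p(n)`, so each of
these four equations, multiplied by `π(x)`, becomes a partial balance of the master equation:
the outflow from `x` through the reactions consuming species `j` (resp. through creation)
equals the matching inflow. The four partial balances add up to the master equation.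
-/

open Real

noncomputable def poissonWeight (m : ℝ) (n : ℕ) : ℝ := exp (-m) * m ^ n / n.factorial

theorem succ_mul_poissonWeight_succ (m : ℝ) (n : ℕ) :
    ((n : ℝ) + 1) * poissonWeight m (n + 1) = m * poissonWeight m n := by
  have hfac : (n.factorial : ℝ) ≠ 0 := Nat.cast_ne_zero.mpr n.factorial_ne_zero
  simp only [poissonWeight, Nat.factorial_succ, pow_succ]
  push_cast
  field_simp

noncomputable def poissonProduct (a b c : ℝ) (i j k : ℕ) : ℝ :=
  poissonWeight a i * poissonWeight b j * poissonWeight c k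

namespace poissonProduct

theorem succ_mul_succ_fst (a b c : ℝ) (i j k : ℕ) :
    ((i : ℝ) + 1) * poissonProduct a b c (i + 1) j k = a * poissonProduct a b c i j k := by
  unfold poissonProduct
  linear_combination poissonWeight b j * poissonWeight c k * succ_mul_poissonWeight_succ a i

theorem succ_mul_succ_snd (a b c : ℝ) (i j k : ℕ) :
    ((j : ℝ) + 1) * poissonProduct a b c i (j + 1) k = b * poissonProduct a b c i j k := by
  unfold poissonProduct
  linear_combination poissonWeight a i * poissonWeight c k * succ_mul_poissonWeight_succ b j

theorem succ_mul_succ_thd (a b c : ℝ) (i j k : ℕ) :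
    ((k : ℝ) + 1) * poissonProduct a b c i j (k + 1) = c * poissonProduct a b c i j k := by
  unfold poissonProduct
  linear_combination poissonWeight a i * poissonWeight b j * succ_mul_poissonWeight_succ c k

variable {a b c k1V k2 κ γ : ℝ}

theorem creation_balance (h : k2 * c = k1V) (i j k : ℕ) :
    k1V * poissonProduct a b c i j k = k2 * (k + 1) * poissonProduct a b c i j (k + 1) := by
  linear_combination -k2 * succ_mul_succ_thd a b c i j k - poissonProduct a b c i j k * h

theorem fst_balance (h : k1V + κ * b = κ * a) (i j k : ℕ) :
    κ * i * poissonProduct a b c i j k =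
      k1V * (if i = 0 then 0 else poissonProduct a b c (i - 1) j k) +
        κ * (j + 1) * (if i = 0 then 0 else poissonProduct a b c (i - 1) (j + 1) k) := by
  rcases i with _ | i
  · simp
  · simp only [Nat.succ_ne_zero, if_false, Nat.add_sub_cancel]
    push_cast
    linear_combination κ * succ_mul_succ_fst a b c i j k - κ * succ_mul_succ_snd a b c i j k -
      poissonProduct a b c i j k * h

theorem snd_balance (h : κ * a + γ * c = (κ + γ) * b) (i j k : ℕ) :
    (κ + γ) * j * poissonProduct a b c i j k =
      κ * (i + 1) * (if j = 0 then 0 else poissonProduct a b c (i + 1) (j - 1) k) +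
        γ * (k + 1) * (if j = 0 then 0 else poissonProduct a b c i (j - 1) (k + 1)) := by
  rcases j with _ | j
  · simp
  · simp only [Nat.succ_ne_zero, if_false, Nat.add_sub_cancel]
    push_cast
    linear_combination (κ + γ) * succ_mul_succ_snd a b c i j k -
      κ * succ_mul_succ_fst a b c i j k - γ * succ_mul_succ_thd a b c i j k -
      poissonProduct a b c i j k * h

theorem thd_balance (h : γ * b = (γ + k2) * c) (i j k : ℕ) :
    (γ + k2) * k * poissonProduct a b c i j k =
      γ * (j + 1) * (if k = 0 then 0 else poissonProduct a b c i (j + 1) (k - 1)) := by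
  rcases k with _ | k
  · simp
  · simp only [Nat.succ_ne_zero, if_false, Nat.add_sub_cancel]
    push_cast
    linear_combination (γ + k2) * succ_mul_succ_thd a b c i j k -
      γ * succ_mul_succ_snd a b c i j k - poissonProduct a b c i j k * h

theorem master_equation (h₁ : k1V + κ * b = κ * a) (h₂ : κ * a + γ * c = (κ + γ) * b)
    (h₃ : γ * b = (γ + k2) * c) (i j k : ℕ) :
    (k1V + k2 * k + κ * i + κ * j + γ * j + γ * k) * poissonProduct a b c i j k =
      k1V * (if i = 0 then 0 else poissonProduct a b c (i - 1) j k) +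
        k2 * (k + 1) * poissonProduct a b c i j (k + 1) +
        κ * (i + 1) * (if j = 0 then 0 else poissonProduct a b c (i + 1) (j - 1) k) +
        κ * (j + 1) * (if i = 0 then 0 else poissonProduct a b c (i - 1) (j + 1) k) +
        γ * (j + 1) * (if k = 0 then 0 else poissonProduct a b c i (j + 1) (k - 1)) +
        γ * (k + 1) * (if j = 0 then 0 else poissonProduct a b c i (j - 1) (k + 1)) := by
  have h₀ : k2 * c = k1V := by linear_combination -h₁ - h₂ - h₃
  linear_combination creation_balance h₀ i j k + fst_balance h₁ i j k +
    snd_balance h₂ i j k + thd_balance h₃ i j k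

end poissonProduct

theorem product_poisson_invariant_three_species_system_general
    (k1V k2 kappa gamma : ℝ)
    (h2 : 0 < k2) (hk : 0 < kappa) (hg : 0 < gamma)
    (x2bar x1bar x3bar : ℝ)
    (hx2 : x2bar = k1V * (gamma + k2) / (gamma * k2))
    (hx1 : x1bar = x2bar + k1V / kappa)
    (hx3 : x3bar = k1V / k2)
    (pi : ℕ → ℕ → ℕ → ℝ)
    (hpi : ∀ x1 x2 x3 : ℕ, pi x1 x2 x3 =
      (Real.exp (-x1bar) * x1bar ^ x1 / x1.factorial) *
        (Real.exp (-x2bar) * x2bar ^ x2 / x2.factorial) *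
        (Real.exp (-x3bar) * x3bar ^ x3 / x3.factorial)) :
    ∀ x1 x2 x3 : ℕ,
      (k1V + k2 * x3 + kappa * x1 + kappa * x2 + gamma * x2 + gamma * x3) *
          pi x1 x2 x3 =
        k1V * (if x1 = 0 then 0 else pi (x1 - 1) x2 x3) +
          k2 * (x3 + 1) * pi x1 x2 (x3 + 1) +
          kappa * (x1 + 1) * (if x2 = 0 then 0 else pi (x1 + 1) (x2 - 1) x3) +
          kappa * (x2 + 1) * (if x1 = 0 then 0 else pi (x1 - 1) (x2 + 1) x3) +
          gamma * (x2 + 1) * (if x3 = 0 then 0 else pi x1 (x2 + 1) (x3 - 1)) +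
          gamma * (x3 + 1) * (if x2 = 0 then 0 else pi x1 (x2 - 1) (x3 + 1)) := by
  obtain rfl : pi = poissonProduct x1bar x2bar x3bar := by
    funext i j k
    exact hpi i j k
  have := h2.ne'; have := hk.ne'; have := hg.ne'
  apply poissonProduct.master_equation
  · rw [hx1]; field_simp; ring
  · rw [hx1, hx2, hx3]; field_simp; ring
  · rw [hx2, hx3]; field_simp

/-- The product of independent Poisson distributions with means
`x̄1 = k1V(γ+k2)/(γk2) + k1V/κ`, `x̄2 = k1V(γ+k2)/(γk2)`, `x̄3 = k1V/k2`
satisfies the stationary master equation of the three-species linear system.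
Terms whose argument would have a negative coordinate are zero. -/
theorem product_poisson_invariant_three_species_system
    (k1V k2 kappa gamma : ℝ)
    (h1 : 0 < k1V) (h2 : 0 < k2) (hk : 0 < kappa) (hg : 0 < gamma)
    (x2bar x1bar x3bar : ℝ)
    (hx2 : x2bar = k1V * (gamma + k2) / (gamma * k2))
    (hx1 : x1bar = x2bar + k1V / kappa)
    (hx3 : x3bar = k1V / k2)
    (pi : ℕ → ℕ → ℕ → ℝ)
    (hpi : ∀ x1 x2 x3 : ℕ, pi x1 x2 x3 =
      (Real.exp (-x1bar) * x1bar ^ x1 / x1.factorial) *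
        (Real.exp (-x2bar) * x2bar ^ x2 / x2.factorial) *
        (Real.exp (-x3bar) * x3bar ^ x3 / x3.factorial)) :
    ∀ x1 x2 x3 : ℕ,
      (k1V + k2 * x3 + kappa * x1 + kappa * x2 + gamma * x2 + gamma * x3) *
          pi x1 x2 x3 =
        k1V * (if x1 = 0 then 0 else pi (x1 - 1) x2 x3) +
          k2 * (x3 + 1) * pi x1 x2 (x3 + 1) +
          kappa * (x1 + 1) * (if x2 = 0 then 0 else pi (x1 + 1) (x2 - 1) x3) +
          kappa * (x2 + 1) * (if x1 = 0 then 0 else pi (x1 - 1) (x2 + 1) x3) +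
          gamma * (x2 + 1) * (if x3 = 0 then 0 else pi x1 (x2 + 1) (x3 - 1)) +
          gamma * (x3 + 1) * (if x2 = 0 then 0 else pi x1 (x2 - 1) (x3 + 1)) :=
  product_poisson_invariant_three_species_system_general k1V k2 kappa gamma h2 hk hg x2bar x1bar
    x3bar hx2 hx1 hx3 pi hpi
end

section
/- Let S1 be a natural number and γ > 0 real. Define p(i) = C(S1, i) (1/3)^i (2/3)^(S1−i) for 0 ≤ i ≤ S1 (the Binomial(S1, 1/3) probability mass function), with p(i) = 0 outside {0,...,S1}. Then p satisfies the stationary master equation of the reduced intermediate system: for every 0 ≤ i ≤ S1, ((γ/2)·(S1−i) + γ·i)·p(i) = (γ/2)·(S1−(i−1))·p(i−1) + γ·(i+1)·p(i+1), where terms with argument outside {0,...,S1} are zero. Consequently the mean of p is S1/3, i.e. the invariant distribution of the reduced intermediate system has E[X3] = S1/3 and E[S2] = 2S1/3. -/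
/-!
The Binomial(n, q) weights `w k` satisfy detailed balance for the birth–death chain with
up-rate `q (n - k)` and down-rate `(1 - q) k`, since `(n - k) C(n, k) = (k + 1) C(n, k + 1)`.
The rates `(γ/2)(S1 - i)` and `γ i` are `3γ/2` times these for `q = 1/3`. Detailed balance
across every edge `i ↔ i + 1` forces the balance of total flow at every state. Summing the
detailed balance equations over `k` gives `q (n - m) = (1 - q) m` for the mean `m`, hence `m = n q`.
-/

open Finset

section

variable {R : Type*} [CommRing R]

theorem global_balance_of_detailed_balance (f up down : ℤ → R)
    (h : ∀ i, up i * f i = down (i + 1) * f (i + 1)) (i : ℤ) :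
    (up i + down i) * f i = up (i - 1) * f (i - 1) + down (i + 1) * f (i + 1) := by
  have h_prev := h (i - 1)
  rw [sub_add_cancel] at h_prev
  linear_combination h i - h_prev

def binomialWeight (q : R) (n k : ℕ) : R :=
  n.choose k * q ^ k * (1 - q) ^ (n - k)

theorem binomialWeight_of_lt {q : R} {n k : ℕ} (h : n < k) : binomialWeight q n k = 0 := by
  simp [binomialWeight, Nat.choose_eq_zero_of_lt h]

theorem sum_binomialWeight (q : R) (n : ℕ) :
    ∑ k ∈ range (n + 1), binomialWeight q n k = 1 := by
  have h := add_pow q (1 - q) n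
  rw [add_sub_cancel, one_pow] at h
  rw [h]
  exact sum_congr rfl fun k _ => by rw [binomialWeight]; ring

theorem choose_mul_sub_cast (n k : ℕ) :
    (n.choose k : R) * ((n : R) - k) = n.choose (k + 1) * ((k : R) + 1) := by
  rcases le_or_gt k n with hk | hk
  · rw [← Nat.cast_sub hk]
    exact_mod_cast congrArg (Nat.cast (R := R)) (Nat.choose_succ_right_eq n k).symm
  · simp [Nat.choose_eq_zero_of_lt hk, Nat.choose_eq_zero_of_lt (hk.trans (Nat.lt_succ_self k))]

theorem binomialWeight_detailed_balance (q : R) (n k : ℕ) :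
    q * ((n : R) - k) * binomialWeight q n k =
      (1 - q) * ((k : R) + 1) * binomialWeight q n (k + 1) := by
  rcases le_or_gt n k with hk | hk
  · rw [binomialWeight_of_lt (Nat.lt_succ_of_le hk)]
    rcases hk.eq_or_lt with rfl | hk
    · simp
    · simp [binomialWeight_of_lt hk]
  · have hpow : (1 - q) ^ (n - k) = (1 - q) * (1 - q) ^ (n - (k + 1)) := by
      rw [← pow_succ', Nat.sub_succ', Nat.sub_add_cancel (Nat.sub_pos_of_lt hk)]
    simp only [binomialWeight, hpow, pow_succ]
    linear_combination
      q * q ^ k * (1 - q) * (1 - q) ^ (n - (k + 1)) * choose_mul_sub_cast (R := R) n k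

theorem sum_mul_binomialWeight (q : R) (n : ℕ) :
    ∑ k ∈ range (n + 1), (k : R) * binomialWeight q n k = n * q := by
  set m := ∑ k ∈ range (n + 1), (k : R) * binomialWeight q n k
  have h_flow : ∑ k ∈ range (n + 1), q * ((n : R) - k) * binomialWeight q n k =
      ∑ k ∈ range (n + 1), (1 - q) * ((k : R) + 1) * binomialWeight q n (k + 1) :=
    sum_congr rfl fun k _ => binomialWeight_detailed_balance q n k
  have h_out : ∑ k ∈ range (n + 1), q * ((n : R) - k) * binomialWeight q n k = q * (n - m) := by
    simp only [mul_assoc, ← mul_sum, sub_mul, sum_sub_distrib, sum_binomialWeight, mul_one, m]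
  have h_in : ∑ k ∈ range (n + 1), (1 - q) * ((k : R) + 1) * binomialWeight q n (k + 1) =
      (1 - q) * m := by
    have h_shift := sum_range_succ' (fun k => (k : R) * binomialWeight q n k) (n + 1)
    rw [sum_range_succ, binomialWeight_of_lt (Nat.lt_succ_self n)] at h_shift
    simp only [mul_assoc, ← mul_sum, m]
    push_cast at h_shift
    linear_combination (q - 1) * h_shift
  linear_combination -(h_out.symm.trans (h_flow.trans h_in))

end

theorem binomial_invariant_reduced_intermediate_system_general
    (S1 : ℕ) (gamma : ℝ)
    (p : ℤ → ℝ)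
    (hp : ∀ i : ℤ, p i =
      if 0 ≤ i ∧ i ≤ (S1 : ℤ) then
        (S1.choose i.toNat : ℝ) * (1 / 3 : ℝ) ^ i.toNat *
          (2 / 3 : ℝ) ^ (S1 - i.toNat)
      else 0) :
    (∀ i : ℤ, 0 ≤ i → i ≤ (S1 : ℤ) →
      (gamma / 2 * ((S1 : ℝ) - (i : ℝ)) + gamma * (i : ℝ)) * p i =
        gamma / 2 * ((S1 : ℝ) - ((i : ℝ) - 1)) * p (i - 1) +
          gamma * ((i : ℝ) + 1) * p (i + 1)) ∧
    (∑ i ∈ Finset.range (S1 + 1), (i : ℝ) * p i) = (S1 : ℝ) / 3 ∧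
    (∑ i ∈ Finset.range (S1 + 1), ((S1 : ℝ) - (i : ℝ)) * p i) =
      2 * (S1 : ℝ) / 3 := by
  have hp_nat (k : ℕ) : p k = binomialWeight (1 / 3) S1 k := by
    rw [hp]
    split_ifs with hk
    · norm_num [binomialWeight]
    · rw [binomialWeight_of_lt (by omega)]
  have hp_neg (i : ℤ) (hi : i < 0) : p i = 0 := by
    rw [hp, if_neg (by omega)]
  have h_detailed (i : ℤ) :
      gamma / 2 * ((S1 : ℝ) - (i : ℝ)) * p i = gamma * ((i + 1 : ℤ) : ℝ) * p (i + 1) := by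
    rcases le_or_gt 0 i with hi | hi
    · obtain ⟨k, rfl⟩ := Int.eq_ofNat_of_zero_le hi
      have h := binomialWeight_detailed_balance (1 / 3 : ℝ) S1 k
      rw [← Nat.cast_succ, hp_nat, hp_nat]
      push_cast
      linear_combination 3 * gamma / 2 * h
    · rcases (Int.add_one_le_of_lt hi).eq_or_lt with h_eq | h_lt
      · simp [hp_neg i hi, h_eq]
      · simp [hp_neg i hi, hp_neg (i + 1) h_lt]
  refine ⟨fun i _ _ => ?_, ?_, ?_⟩
  · have h := global_balance_of_detailed_balance p (fun i => gamma / 2 * ((S1 : ℝ) - (i : ℝ)))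
      (fun i => gamma * (i : ℝ)) h_detailed i
    push_cast at h
    exact h
  · simp only [hp_nat, sum_mul_binomialWeight]
    ring
  · simp only [hp_nat, sub_mul, sum_sub_distrib, ← mul_sum, sum_binomialWeight,
      sum_mul_binomialWeight]
    ring

/-- The Binomial(S1, 1/3) distribution satisfies the stationary master equation
of the reduced intermediate system with up-rate `(γ/2)·(S1−i)` and down-rate
`γ·i` (terms with argument outside `{0,...,S1}` are zero), and consequently its
mean is `S1/3`:  `E[X3] = S1/3` and `E[S2] = E[S1 − X3] = 2·S1/3`. -/
theorem binomial_invariant_reduced_intermediate_system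
    (S1 : ℕ) (gamma : ℝ) (hg : 0 < gamma)
    (p : ℤ → ℝ)
    (hp : ∀ i : ℤ, p i =
      if 0 ≤ i ∧ i ≤ (S1 : ℤ) then
        (S1.choose i.toNat : ℝ) * (1 / 3 : ℝ) ^ i.toNat *
          (2 / 3 : ℝ) ^ (S1 - i.toNat)
      else 0) :
    (∀ i : ℤ, 0 ≤ i → i ≤ (S1 : ℤ) →
      (gamma / 2 * ((S1 : ℝ) - (i : ℝ)) + gamma * (i : ℝ)) * p i =
        gamma / 2 * ((S1 : ℝ) - ((i : ℝ) - 1)) * p (i - 1) +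
          gamma * ((i : ℝ) + 1) * p (i + 1)) ∧
    (∑ i ∈ Finset.range (S1 + 1), (i : ℝ) * p i) = (S1 : ℝ) / 3 ∧
    (∑ i ∈ Finset.range (S1 + 1), ((S1 : ℝ) - (i : ℝ)) * p i) =
      2 * (S1 : ℝ) / 3 :=
  binomial_invariant_reduced_intermediate_system_general S1 gamma p hp
end

section
/- Let k1V, k2, κ, γ > 0. The nested QSSA reduction of the three-species linear system yields the effective slow system ∅ →^{k1} S1 →^{k2/3} ∅, whose invariant distribution is Poisson with intensity λ_QSSA = 3·k1V/k2; i.e. the Poisson pmf q(n) = e^(−λ_QSSA) λ_QSSA^n/n! satisfies (k1V + (k2/3)·n)·q(n) = k1V·q(n−1) + (k2/3)·(n+1)·q(n+1) for all n ∈ ℕ (with q(−1) = 0). Moreover, the true intensity λ_true = (k1V/(k2·γ·κ))·(γ·k2 + 3·γ·κ + 2·k2·κ) of the marginal invariant distribution of S1 = X1 + X2 + X3 satisfies λ_true − λ_QSSA = k1V·(γ + 2κ)/(γ·κ). -/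
/-! For a birth–death chain, global balance at `n` is the sum of the detailed-balance
identities across the edges `n - 1 ↔ n` and `n ↔ n + 1`. The Poisson weights of intensity
`r` satisfy `r q(n) = (n + 1) q(n + 1)`, which is detailed balance for birth rate `k1V` and
death rate `(k2/3) n` exactly when `r = 3 k1V / k2`. The intensity gap is field arithmetic. -/

open Nat

theorem BirthDeath.balance_of_detailed_balance {β δ p : ℕ → ℝ} (hδ : δ 0 = 0)
    (h : ∀ n, β n * p n = δ (n + 1) * p (n + 1)) (n : ℕ) :
    (β n + δ n) * p n = (if n = 0 then 0 else β (n - 1) * p (n - 1)) + δ (n + 1) * p (n + 1) := by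
  cases n with
  | zero => simp [hδ, h 0]
  | succ m =>
    rw [if_neg (succ_ne_zero m), add_tsub_cancel_right, add_mul, h m, h (m + 1), add_comm]

theorem poisson_mul_eq_succ_mul {r : ℝ} {q : ℕ → ℝ}
    (hq : ∀ n : ℕ, q n = Real.exp (-r) * r ^ n / n !) (n : ℕ) :
    r * q n = (n + 1) * q (n + 1) := by
  rw [hq, hq, factorial_succ, cast_mul, pow_succ]
  field_simp
  push_cast
  ring

theorem nested_QSSA_intensity_error_general
    (k1V k2 kappa gamma : ℝ)
    (h2 : 0 < k2) (hk : 0 < kappa) (hg : 0 < gamma)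
    (lamQSSA lamTrue : ℝ)
    (hQ : lamQSSA = 3 * k1V / k2)
    (hT : lamTrue = k1V / (k2 * gamma * kappa) *
      (gamma * k2 + 3 * gamma * kappa + 2 * k2 * kappa))
    (q : ℕ → ℝ)
    (hq : ∀ n : ℕ, q n = Real.exp (-lamQSSA) * lamQSSA ^ n / n.factorial) :
    (∀ n : ℕ,
      (k1V + k2 / 3 * n) * q n =
        k1V * (if n = 0 then 0 else q (n - 1)) + k2 / 3 * (n + 1) * q (n + 1)) ∧
    lamTrue - lamQSSA = k1V * (gamma + 2 * kappa) / (gamma * kappa) := by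
  have hbirth : k1V = k2 / 3 * lamQSSA := by
    rw [hQ]
    field_simp
  have hdetailed (n : ℕ) : k1V * q n = k2 / 3 * ((n + 1 : ℕ) : ℝ) * q (n + 1) := by
    rw [hbirth, mul_assoc, poisson_mul_eq_succ_mul hq, cast_succ, mul_assoc]
  refine ⟨fun n => ?_, ?_⟩
  · have hglobal := BirthDeath.balance_of_detailed_balance (β := fun _ => k1V)
      (δ := fun n => k2 / 3 * n) (by simp) hdetailed n
    simpa only [mul_ite, mul_zero, cast_succ] using hglobal
  · rw [hQ, hT]
    field_simp
    ring

/-- The nested QSSA reduction of the three-species linear system gives the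
effective birth–death chain on `S1` with birth rate `k1V` and death rate
`(k2/3)·n`, whose invariant distribution is Poisson with intensity
`λ_QSSA = 3k1V/k2`; moreover the true intensity
`λ_true = (k1V/(k2γκ))(γk2 + 3γκ + 2k2κ)` of the marginal invariant
distribution of `S1` satisfies `λ_true − λ_QSSA = k1V(γ+2κ)/(γκ)`. -/
theorem nested_QSSA_intensity_error
    (k1V k2 kappa gamma : ℝ)
    (h1 : 0 < k1V) (h2 : 0 < k2) (hk : 0 < kappa) (hg : 0 < gamma)
    (lamQSSA lamTrue : ℝ)
    (hQ : lamQSSA = 3 * k1V / k2)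
    (hT : lamTrue = k1V / (k2 * gamma * kappa) *
      (gamma * k2 + 3 * gamma * kappa + 2 * k2 * kappa))
    (q : ℕ → ℝ)
    (hq : ∀ n : ℕ, q n = Real.exp (-lamQSSA) * lamQSSA ^ n / n.factorial) :
    (∀ n : ℕ,
      (k1V + k2 / 3 * n) * q n =
        k1V * (if n = 0 then 0 else q (n - 1)) + k2 / 3 * (n + 1) * q (n + 1)) ∧
    lamTrue - lamQSSA = k1V * (gamma + 2 * kappa) / (gamma * kappa) :=
  nested_QSSA_intensity_error_general k1V k2 kappa gamma h2 hk hg lamQSSA lamTrue hQ hT q hq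
end
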